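/- With the same setup: for any function f : {i ∈ ℤ : i ≥ 2} → ℤ/2ℤ that is not identically zero, there exists h ∈ Z (the set defined by Z = ⋃_{k≥2} ⋂_{m≥0} (τ^{-1}_*)^m(C_{k+m})) such that h(i) = f(i) for all i ≥ 2. -/

import Mathlib

/-- The map `τ¹_*` on functions `ℤ* → ℤ/2ℤ` (encoded as functions on `ℤ` whose value at
`0` is irrelevant and set to `0`). -/
def tau1 (h : ℤ → ZMod 2) : ℤ → ZMod 2 := fun i =>
  if i < -2 then h (-i) + h (i - 1) + h i + h (i + 1)
  else if i = -2 then h (-i) + h (-2) + h (-3)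
  else if i = -1 then h (-i) + h (-2)
  else if i = 0 then 0
  else h (-i)

/-- The map `τ⁻¹_*` on functions `ℤ* → ℤ/2ℤ`. -/
def tauNeg1 (h : ℤ → ZMod 2) : ℤ → ZMod 2 := fun i =>
  if i < 0 then h (-i)
  else if i = 0 then 0
  else if i = 1 then h (-i) + h 2
  else if i = 2 then h (-i) + h 2 + h 3
  else h (-i) + h (i - 1) + h i + h (i + 1)

/-- The cylinder set `C_k = {h : h(k) = h(-k-1) = 1, h(i) = 0 for -k-1 < i < k, i ≠ 0}`. -/
def Cyl (k : ℤ) : Set (ℤ → ZMod 2) :=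
  {h | h k = 1 ∧ h (-k - 1) = 1 ∧ ∀ i : ℤ, -k - 1 < i → i < k → i ≠ 0 → h i = 0}

/-- `HasProx h k` says the proximity `P(h) = min {|i| : h(i) ≠ 0}` equals `k`. -/
def HasProx (h : ℤ → ZMod 2) (k : ℤ) : Prop :=
  (h k ≠ 0 ∨ h (-k) ≠ 0) ∧ ∀ i : ℤ, i ≠ 0 → |i| < k → h i = 0

/-- `Z = ⋃_{k ≥ 2} ⋂_{m ≥ 0} (τ⁻¹_*)^m(C_{k+m})`. -/
def Zset : Set (ℤ → ZMod 2) :=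
  {h | ∃ k : ℤ, 2 ≤ k ∧ ∀ m : ℕ, tau1^[m] h ∈ Cyl (k + m)}

/-! Write `h_m = (τ¹_*)^m h` and `B m j = h_m(k + m + j)`, so that `h_m(-k - m - 1 - j) = B (m+1) j`
because `h_{m+1}(i) = h_m(-i)` for `i > 0`. For `i < 0` the definition of `h_{m+1}(i)` is linear in
`h_m(-i)`, hence can be read as a recurrence for `B` that lets row `0` (the values of `h` at
`i ≥ k`) be prescribed freely. With `B m j = 0` for `j < 0` the recurrence forces column `0` to be
constant, and `B m 0 = 1` together with that vanishing is exactly `h_m ∈ C_{k+m}`. Taking `k`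
the least `i ≥ 2` with `f(i) ≠ 0` gives the required `h`. -/

/-- `orbitArray g c r` is `B r c`; columns `0` and `1` are what the recurrence forces. -/
def orbitArray (g : ℕ → ZMod 2) : ℕ → ℕ → ZMod 2
  | 0, _ => 1
  | 1, r => g 1 + (r : ZMod 2)
  | (c + 2), 0 => g (c + 2)
  | (c + 2), (r + 1) =>
      orbitArray g c (r + 2) + orbitArray g (c + 2) r + orbitArray g c (r + 1) +
        orbitArray g (c + 1) (r + 1)
termination_by c r => (c, r)

def orbitRow (g : ℕ → ZMod 2) (m : ℕ) (j : ℤ) : ZMod 2 :=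
  if j < 0 then 0 else orbitArray g j.toNat m

/-- The `m`-th iterate `h_m`, for proximity `k`. -/
def orbit (g : ℕ → ZMod 2) (k : ℤ) (m : ℕ) (i : ℤ) : ZMod 2 :=
  if 0 < i then orbitRow g m (i - k - m) else orbitRow g (m + 1) (-i - k - m - 1)

section orbitRow

variable (g : ℕ → ZMod 2) (m : ℕ)

lemma orbitRow_of_neg {j : ℤ} (hj : j < 0) : orbitRow g m j = 0 :=
  if_pos hj

lemma orbitRow_natCast (c : ℕ) : orbitRow g m c = orbitArray g c m := by
  simp [orbitRow]

lemma orbitRow_zero_right : orbitRow g m 0 = 1 := by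
  simp [orbitRow, orbitArray]

lemma orbitRow_one_right : orbitRow g m 1 = g 1 + (m : ZMod 2) := by
  simp [orbitRow, orbitArray]

lemma orbitRow_zero_left (hg0 : g 0 = 1) (c : ℕ) : orbitRow g 0 c = g c := by
  rw [orbitRow_natCast]
  rcases c with _ | _ | c
  · simp [orbitArray, hg0]
  · simp [orbitArray]
  · rw [orbitArray]

lemma orbitRow_recurrence (j : ℤ) :
    orbitRow g (m + 2) j =
      orbitRow g m (j + 2) + orbitRow g (m + 1) (j + 2) + orbitRow g (m + 1) (j + 1) +
        orbitRow g (m + 1) j := by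
  obtain hj | rfl | rfl | ⟨c, rfl⟩ : j < -2 ∨ j = -2 ∨ j = -1 ∨ ∃ c : ℕ, j = c := by
    rcases lt_or_ge j 0 with hj | hj
    · omega
    · exact Or.inr (Or.inr (Or.inr ⟨j.toNat, by omega⟩))
  · simp only [orbitRow_of_neg g _ (by omega : j < 0), orbitRow_of_neg g _ (by omega : j + 1 < 0),
      orbitRow_of_neg g _ (by omega : j + 2 < 0), add_zero]
  · norm_num [orbitRow_zero_right, orbitRow_of_neg]
    decide
  · norm_num [orbitRow_zero_right, orbitRow_one_right, orbitRow_of_neg]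
    grind
  · have key := orbitArray.eq_4 g c m
    rw [show (c : ℤ) + 2 = ((c + 2 : ℕ) : ℤ) by push_cast; ring,
      show (c : ℤ) + 1 = ((c + 1 : ℕ) : ℤ) by push_cast; ring]
    simp only [orbitRow_natCast] at key ⊢
    grind

end orbitRow

section tau1

variable (h : ℤ → ZMod 2) {i : ℤ}

lemma tau1_apply_of_pos (hi : 0 < i) : tau1 h i = h (-i) := by
  unfold tau1
  split_ifs <;> first | rfl | omega

lemma tau1_apply_zero : tau1 h 0 = 0 := by
  simp [tau1]

lemma tau1_apply_of_neg (hi : i < 0) (h0 : h 0 = 0) (h1 : h (-1) = 0) :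
    tau1 h i = h (-i) + h (i - 1) + h i + h (i + 1) := by
  unfold tau1
  split_ifs <;> subst_vars <;> norm_num [h0, h1] <;> first | omega | ring

end tau1

section orbit

variable (g : ℕ → ZMod 2) {k : ℤ}

lemma tau1_orbit (hk : 0 < k) (m : ℕ) : tau1 (orbit g k m) = orbit g k (m + 1) := by
  funext i
  rcases lt_trichotomy i 0 with hi | rfl | hi
  · rw [tau1_apply_of_neg _ hi (by simp [orbit, orbitRow_of_neg g _ (by omega : -k - m - 1 < 0)])
      (by simp [orbit, orbitRow_of_neg g _ (by omega : 1 - k - m - 1 < 0)])]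
    simp only [orbit, if_neg (by omega : ¬ 0 < i), if_neg (by omega : ¬ 0 < i - 1),
      if_neg (by omega : ¬ 0 < i + 1), if_pos (by omega : 0 < -i), orbitRow_recurrence]
    push_cast
    ring_nf
  · simp [tau1_apply_zero, orbit, orbitRow_of_neg g _ (by omega : -k - (m + 1) - 1 < 0)]
  · simp only [tau1_apply_of_pos _ hi, orbit, if_neg (by omega : ¬ 0 < -i), if_pos hi]
    push_cast
    ring_nf

lemma iterate_tau1_orbit (hk : 0 < k) (m : ℕ) : tau1^[m] (orbit g k 0) = orbit g k m := by
  induction m with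
  | zero => rfl
  | succ n ih => rw [Function.iterate_succ_apply', ih, tau1_orbit g hk]

lemma orbit_mem_Cyl (hk : 0 < k) (m : ℕ) : orbit g k m ∈ Cyl (k + m) := by
  refine ⟨?_, ?_, fun i hlo hhi hi0 => ?_⟩
  · rw [orbit, if_pos (by omega), ← orbitRow_zero_right g m]
    ring_nf
  · rw [orbit, if_neg (by omega), ← orbitRow_zero_right g (m + 1)]
    ring_nf
  · unfold orbit
    split_ifs <;> exact orbitRow_of_neg _ _ (by omega)

lemma orbit_mem_Zset (hk : 2 ≤ k) : orbit g k 0 ∈ Zset :=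
  ⟨k, hk, fun m => iterate_tau1_orbit g (k := k) (by omega) m ▸ orbit_mem_Cyl g (by omega) m⟩

lemma orbit_zero_apply_of_lt {i : ℤ} (hi : 0 < i) (hik : i < k) : orbit g k 0 i = 0 := by
  rw [orbit, if_pos hi, orbitRow_of_neg _ _ (by omega)]

lemma orbit_zero_apply_of_le (hg0 : g 0 = 1) {i : ℤ} (hk : 0 < k) (hki : k ≤ i) :
    orbit g k 0 i = g (i - k).toNat := by
  rw [orbit, if_pos (by omega), ← orbitRow_zero_left g hg0]
  congr 1
  omega

end orbit

/-- For any function `f` on `{i ∈ ℤ : i ≥ 2}` with values in `ℤ/2ℤ` which is not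
identically zero, there exists `h ∈ Z` with `h(i) = f(i)` for all `i ≥ 2`. -/
theorem stmt16 (f : ℤ → ZMod 2) (hf : ∃ i : ℤ, 2 ≤ i ∧ f i ≠ 0) :
    ∃ h ∈ Zset, ∀ i : ℤ, 2 ≤ i → h i = f i := by
  obtain ⟨k, ⟨hk, hfk⟩, hmin⟩ := Int.exists_least_of_bdd ⟨2, fun _ hi => hi.1⟩ hf
  set g : ℕ → ZMod 2 := fun c => f (k + c)
  have hg0 : g 0 = 1 := by
    simp only [g, Nat.cast_zero, add_zero]
    exact Fin.eq_one_of_ne_zero _ hfk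
  refine ⟨orbit g k 0, orbit_mem_Zset g hk, fun i hi => ?_⟩
  rcases lt_or_ge i k with hik | hki
  · rw [orbit_zero_apply_of_lt g (by omega) hik]
    by_contra hfi
    exact (hmin i ⟨hi, Ne.symm hfi⟩).not_gt hik
  · rw [orbit_zero_apply_of_le g hg0 (by omega) hki]
    show f (k + (i - k).toNat) = f i
    congr 1
    omega
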